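/- For a merge tree T and a path P with i(T) 1-simplices, the induced index-ordered dMf f_io and the induced sublevel-connected dMf f_sc on P are shuffle-equivalent; consequently M(P, f_io) and M(P, f_sc) are isomorphic merge trees. -/

import Mathlib

/-- Chirality: left or right. -/
inductive Chir : Type
  | L : Chir
  | R : Chir
  deriving DecidableEq

/-- The opposite chirality. -/
def Chir.other : Chir → Chir
  | .L => .R
  | .R => .L

/-- A merge tree: a full rooted chiral binary tree, encoded by the set of its nodes,
each node being the list of chiralities along the shortest path from the root to it
(the root is the empty list). -/
structure MergeTree : Type where
  nodes : Finset (List Chir)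
  root_mem : [] ∈ nodes
  prefix_closed : ∀ (w : List Chir) (x : Chir), w ++ [x] ∈ nodes → w ∈ nodes
  full : ∀ w : List Chir, w ++ [Chir.L] ∈ nodes ↔ w ++ [Chir.R] ∈ nodes

/-- An inner node: a node with (two) children. -/
def MergeTree.IsInner (T : MergeTree) (n : List Chir) : Prop :=
  n ∈ T.nodes ∧ n ++ [Chir.L] ∈ T.nodes

/-- A leaf node: a node without children. -/
def MergeTree.IsLeaf (T : MergeTree) (n : List Chir) : Prop :=
  n ∈ T.nodes ∧ n ++ [Chir.L] ∉ T.nodes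

/-- The chirality of a node (the root has chirality `L` by convention). -/
def chir (n : List Chir) : Chir := n.getLast?.getD Chir.L

/-- The number of inner nodes of a merge tree. -/
def MergeTree.innerCount (T : MergeTree) : ℕ :=
  (T.nodes.filter fun n => n ++ [Chir.L] ∈ T.nodes).card

/-- Auxiliary comparison of path words; the first argument is the letter at the last
position where the two words agreed (cf. "a_k = b_k"): under a common `L`, the letter
`L` precedes `R`; under a common `R`, `R` precedes `L`; shorter words are larger. -/
def leAux : Chir → List Chir → List Chir → Prop
  | _, _, [] => True
  | _, [], _ :: _ => False
  | last, x :: a, y :: b => if x = y then leAux x a b else x = last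

/-- The sublevel-connected Morse order (comparison of path words; every path word
starts with the letter `L` for the root). -/
def scLe (a b : List Chir) : Prop := leAux Chir.L a b

/-- The index Morse order: leaves below inner nodes; among leaves and among inner
nodes, compare path words. -/
def ioLe (T : MergeTree) (a b : List Chir) : Prop :=
  (T.IsLeaf a ∧ T.IsInner b) ∨
    (((T.IsLeaf a ∧ T.IsLeaf b) ∨ (T.IsInner a ∧ T.IsInner b)) ∧ scLe a b)

/-- The simplex order on the nodes of a merge tree. -/
def simpLe (a b : List Chir) : Prop :=
  a = b ∨ (b ++ [Chir.L]) <+: a ∨ (a ++ [Chir.R]) <+: b ∨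
    ∃ p : List Chir, (p ++ [Chir.L]) <+: a ∧ (p ++ [Chir.R]) <+: b

/-- A Morse order on a merge tree: a total order on the nodes that attains its maximum
at the root of each subtree and its minimum inside the child-subtree matching the
chirality of the root of the subtree. -/
def IsMorseOrder (T : MergeTree) (r : List Chir → List Chir → Prop) : Prop :=
  (∀ a ∈ T.nodes, r a a) ∧
  (∀ a ∈ T.nodes, ∀ b ∈ T.nodes, r a b → r b a → a = b) ∧
  (∀ a ∈ T.nodes, ∀ b ∈ T.nodes, ∀ c ∈ T.nodes, r a b → r b c → r a c) ∧
  (∀ a ∈ T.nodes, ∀ b ∈ T.nodes, r a b ∨ r b a) ∧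
  (∀ p ∈ T.nodes, ∀ n ∈ T.nodes, p <+: n → r n p) ∧
  (∀ p : List Chir, T.IsInner p → ∃ m ∈ T.nodes, (p ++ [chir p]) <+: m ∧
      ∀ n ∈ T.nodes, p <+: n → r m n)

/-- The Morse labeling induced by an order `r`: the unique order isomorphism from the
nodes of `T` onto `{0, 1, …, 2·i(T)}`. -/
def IsMorseLabeling (T : MergeTree) (r : List Chir → List Chir → Prop)
    (lab : List Chir → ℕ) : Prop :=
  (∀ n ∈ T.nodes, lab n < 2 * T.innerCount + 1) ∧
  (∀ k : ℕ, k < 2 * T.innerCount + 1 → ∃ n ∈ T.nodes, lab n = k) ∧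
  (∀ a ∈ T.nodes, ∀ b ∈ T.nodes, lab a = lab b → a = b) ∧
  (∀ a ∈ T.nodes, ∀ b ∈ T.nodes, (r a b ↔ lab a ≤ lab b))

/-- An order-preserving bijection from the simplices of a path with `i(T)` 1-simplices
(concretely: `Fin (2·i(T)+1)` with its linear order, which is the simplex order coming
from an orientation) to the nodes of `T` with the simplex order. -/
def IsSimplexIso (T : MergeTree) (φ : Fin (2 * T.innerCount + 1) → List Chir) : Prop :=
  (∀ i, φ i ∈ T.nodes) ∧
  (∀ n ∈ T.nodes, ∃ i, φ i = n) ∧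
  (∀ i j, i ≤ j ↔ simpLe (φ i) (φ j))

/-- A discrete Morse function, with only critical cells, on a path whose simplices are
listed left to right as `Fin N` (even indices are vertices, odd indices are edges):
injective and weakly increasing from a vertex to an incident edge. -/
def IsPathDMFallCrit {N : ℕ} {α : Type*} [LinearOrder α] (f : Fin N → α) : Prop :=
  Function.Injective f ∧
  ∀ j : ℕ, ∀ h : 2 * j + 2 < N,
    f ⟨2 * j, by omega⟩ ≤ f ⟨2 * j + 1, by omega⟩ ∧
    f ⟨2 * j + 2, by omega⟩ ≤ f ⟨2 * j + 1, by omega⟩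

/-- `(T, ν)` is the Morse labeled merge tree induced by a dMf `f` (with only critical
cells) on a path whose simplices are `Fin N` listed left to right: `ν` assigns to each
node of `T` its corresponding critical simplex; the root corresponds to the maximal
critical edge; the children of an inner node correspond to the maxima of `f` on the two
connected components of the strict sublevel complex adjacent to the corresponding edge,
the component containing the smaller minimum inheriting the parent's chirality.  The
canonical labeling of the induced Ml tree is `f ∘ ν`. -/
def InducedMlPath {N : ℕ} {α : Type*} [LinearOrder α] (f : Fin N → α)
    (T : MergeTree) (ν : List Chir → Fin N) : Prop :=
  (∀ n ∈ T.nodes, ∀ n' ∈ T.nodes, ν n = ν n' → n = n') ∧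
  (∀ n ∈ T.nodes, (T.IsLeaf n ↔ (ν n).1 % 2 = 0)) ∧
  ((∃ i : Fin N, i.1 % 2 = 1) →
    T.IsInner [] ∧ ∀ i : Fin N, i.1 % 2 = 1 → f i ≤ f (ν [])) ∧
  ((¬ ∃ i : Fin N, i.1 % 2 = 1) → T.nodes = {([] : List Chir)}) ∧
  (∀ n : List Chir, T.IsInner n → (ν n).1 % 2 = 1 ∧
    ∃ lo hi : Fin N, lo.1 < (ν n).1 ∧ (ν n).1 < hi.1 ∧
      (∀ i : Fin N, lo.1 ≤ i.1 → i.1 < (ν n).1 → f i < f (ν n)) ∧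
      (∀ i : Fin N, (ν n).1 < i.1 → i.1 ≤ hi.1 → f i < f (ν n)) ∧
      (∀ i : Fin N, i.1 + 1 = lo.1 → f (ν n) ≤ f i) ∧
      (∀ i : Fin N, hi.1 + 1 = i.1 → f (ν n) ≤ f i) ∧
      ∃ il ir : Fin N, lo.1 ≤ il.1 ∧ il.1 < (ν n).1 ∧ (ν n).1 < ir.1 ∧ ir.1 ≤ hi.1 ∧
        (∀ i : Fin N, lo.1 ≤ i.1 → i.1 < (ν n).1 → f i ≤ f il) ∧
        (∀ i : Fin N, (ν n).1 < i.1 → i.1 ≤ hi.1 → f i ≤ f ir) ∧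
        ∃ ml mr : Fin N, lo.1 ≤ ml.1 ∧ ml.1 < (ν n).1 ∧ (ν n).1 < mr.1 ∧ mr.1 ≤ hi.1 ∧
          (∀ i : Fin N, lo.1 ≤ i.1 → i.1 < (ν n).1 → f ml ≤ f i) ∧
          (∀ i : Fin N, (ν n).1 < i.1 → i.1 ≤ hi.1 → f mr ≤ f i) ∧
          ((f ml < f mr ∧ ν (n ++ [chir n]) = il ∧ ν (n ++ [(chir n).other]) = ir) ∨
           (f mr < f ml ∧ ν (n ++ [chir n]) = ir ∧ ν (n ++ [(chir n).other]) = il)))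

/-! Consecutive nodes in the simplex order are a leaf and one of its ancestors, so the simplex
isomorphism sends the vertices of the path to leaves and its edges to inner nodes. On leaves, and
on inner nodes, the index order and the sublevel-connected order coincide, hence the two dMfs
are shuffle-equivalent. Both are genuine dMfs: in the index order leaves lie below inner nodes,
and in the sublevel-connected order an edge, an ancestor of its two vertices, lies above them.

The merge tree induced by a dMf on a path is built top-down from the maximal edge: each inner
node splits its sublevel component, and its children are the maxima of the two halves (edges,
unless a half is a single vertex), ordered by the minima of the halves (vertices). The ends of
a component are detected by comparing edges with edges, so every ingredient depends only on the
order among vertices and the order among edges, and shuffle-equivalent dMfs induce the same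
tree. -/

theorem List.append_singleton_not_prefix {α : Type*} (l : List α) (x : α) : ¬ l ++ [x] <+: l :=
  fun h => by simpa using h.length_le

namespace MergeTree

variable (T : MergeTree)

theorem mem_of_prefix {u v : List Chir} (h : u <+: v) (hv : v ∈ T.nodes) : u ∈ T.nodes := by
  obtain ⟨t, rfl⟩ := h
  induction t using List.reverseRecOn with
  | nil => simpa using hv
  | append_singleton t x ih =>
    exact ih (T.prefix_closed _ x (by simpa only [List.append_assoc] using hv))

variable {T}

theorem IsLeaf.not_isInner {n : List Chir} (h : T.IsLeaf n) : ¬ T.IsInner n :=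
  fun h' => h.2 h'.2

theorem isInner_of_not_isLeaf {n : List Chir} (hn : n ∈ T.nodes) (h : ¬ T.IsLeaf n) :
    T.IsInner n :=
  ⟨hn, not_not.mp fun h' => h ⟨hn, h'⟩⟩

theorem simpLe_covBy {a b : List Chir} (ha : a ∈ T.nodes) (hb : b ∈ T.nodes)
    (hab : simpLe a b) (hne : a ≠ b)
    (hcov : ∀ c ∈ T.nodes, simpLe a c → simpLe c b → c = a ∨ c = b) :
    (T.IsLeaf a ∧ T.IsInner b ∧ b <+: a) ∨ (T.IsInner a ∧ T.IsLeaf b ∧ a <+: b) := by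
  rcases hab with rfl | h | h | ⟨p, hpa, hpb⟩
  · exact absurd rfl hne
  · -- otherwise the right child of `a` lies strictly between `a` and `b`
    refine Or.inl ⟨⟨ha, fun haL => ?_⟩, ⟨hb, T.mem_of_prefix h ha⟩,
      (List.prefix_append _ _).trans h⟩
    rcases hcov _ ((T.full a).mp haL) (Or.inr (Or.inr (Or.inl (List.prefix_refl _))))
        (Or.inr (Or.inl (h.trans (List.prefix_append _ _)))) with h' | h'
    · simp at h'
    · have := h.length_le
      simp [← h'] at this
  · -- otherwise the left child of `b` lies strictly between `a` and `b`
    refine Or.inr ⟨⟨ha, (T.full a).mpr (T.mem_of_prefix h hb)⟩, ⟨hb, fun hbL => ?_⟩,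
      (List.prefix_append _ _).trans h⟩
    rcases hcov _ hbL (Or.inr (Or.inr (Or.inl (h.trans (List.prefix_append _ _)))))
        (Or.inr (Or.inl (List.prefix_refl _))) with h' | h'
    · have := h.length_le
      simp [← h'] at this
    · simp at h'
  · have hp : p ∈ T.nodes := T.mem_of_prefix ((List.prefix_append _ _).trans hpa) ha
    rcases hcov p hp (Or.inr (Or.inl hpa)) (Or.inr (Or.inr (Or.inl hpb))) with rfl | rfl
    · exact absurd hpa (List.append_singleton_not_prefix _ _)
    · exact absurd hpb (List.append_singleton_not_prefix _ _)

end MergeTree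

theorem leAux_of_prefix (c : Chir) {p n : List Chir} (h : p <+: n) : leAux c n p := by
  induction p generalizing c n with
  | nil => cases n <;> simp [leAux]
  | cons y p ih =>
    cases n with
    | nil => simp at h
    | cons x n =>
      obtain ⟨rfl, h'⟩ := List.cons_prefix_cons.mp h
      simpa [leAux] using ih y h'

theorem scLe_of_prefix {p n : List Chir} (h : p <+: n) : scLe n p :=
  leAux_of_prefix Chir.L h

section MorseOrders

variable {T : MergeTree} {a b : List Chir}

theorem ioLe_iff_scLe_of_isLeaf (ha : T.IsLeaf a) (hb : T.IsLeaf b) :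
    ioLe T a b ↔ scLe a b := by
  have := hb.not_isInner
  unfold ioLe
  tauto

theorem ioLe_iff_scLe_of_isInner (ha : T.IsInner a) (hb : T.IsInner b) :
    ioLe T a b ↔ scLe a b := by
  have : ¬ T.IsLeaf a := fun h => h.not_isInner ha
  unfold ioLe
  tauto

end MorseOrders

namespace IsSimplexIso

variable {T : MergeTree} {φ : Fin (2 * T.innerCount + 1) → List Chir}

theorem injective (hφ : IsSimplexIso T φ) : Function.Injective φ := fun i j h =>
  le_antisymm ((hφ.2.2 i j).mpr (h ▸ Or.inl rfl)) ((hφ.2.2 j i).mpr (h ▸ Or.inl rfl))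

theorem covBy (hφ : IsSimplexIso T φ) (k : Fin (2 * T.innerCount + 1)) (hk : k.1 + 1 < 2 * T.innerCount + 1) :
    (T.IsLeaf (φ k) ∧ T.IsInner (φ ⟨k.1 + 1, hk⟩) ∧ φ ⟨k.1 + 1, hk⟩ <+: φ k) ∨
      (T.IsInner (φ k) ∧ T.IsLeaf (φ ⟨k.1 + 1, hk⟩) ∧ φ k <+: φ ⟨k.1 + 1, hk⟩) := by
  refine MergeTree.simpLe_covBy (hφ.1 _) (hφ.1 _)
    ((hφ.2.2 _ _).mp (Fin.le_def.mpr (Nat.le_succ _)))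
    (fun h => by simpa [Fin.ext_iff] using hφ.injective h) fun c hc hkc hck => ?_
  obtain ⟨m, rfl⟩ := hφ.2.1 c hc
  have h₁ : k.1 ≤ m.1 := (hφ.2.2 _ _).mpr hkc
  have h₂ : m.1 ≤ k.1 + 1 := (hφ.2.2 _ _).mpr hck
  rcases Nat.lt_or_ge k.1 m.1 with h | h
  · exact Or.inr (congrArg φ (Fin.ext (by simp only; omega)))
  · exact Or.inl (congrArg φ (Fin.ext (by omega)))

theorem isLeaf_zero (hφ : IsSimplexIso T φ) : T.IsLeaf (φ ⟨0, by omega⟩) := by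
  refine ⟨hφ.1 _, fun hL => ?_⟩
  -- the left child would precede the minimum
  obtain ⟨m, hm⟩ := hφ.2.1 _ hL
  have hm0 : m = ⟨0, by omega⟩ :=
    le_antisymm ((hφ.2.2 _ _).mpr (hm ▸ Or.inr (Or.inl (List.prefix_refl _)))) (Fin.zero_le _)
  subst hm0
  simp at hm

theorem isLeaf_iff (hφ : IsSimplexIso T φ) (k : Fin (2 * T.innerCount + 1)) : T.IsLeaf (φ k) ↔ k.1 % 2 = 0 := by
  obtain ⟨k, hk⟩ := k
  induction k with
  | zero => simpa using hφ.isLeaf_zero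
  | succ k ih =>
    have ih := ih (by omega)
    show T.IsLeaf (φ ⟨k + 1, hk⟩) ↔ (k + 1) % 2 = 0
    rcases hφ.covBy ⟨k, by omega⟩ hk with ⟨hl, hi, -⟩ | ⟨hi, hl, -⟩
    · have : k % 2 = 0 := ih.mp hl
      exact iff_of_false (fun h => h.not_isInner hi) (by omega)
    · have : ¬ k % 2 = 0 := fun h => (ih.mpr h).not_isInner hi
      exact iff_of_true hl (by omega)

theorem isInner_iff (hφ : IsSimplexIso T φ) (k : Fin (2 * T.innerCount + 1)) :
    T.IsInner (φ k) ↔ k.1 % 2 = 1 := by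
  by_cases hk : T.IsLeaf (φ k)
  · have := (hφ.isLeaf_iff k).mp hk
    exact iff_of_false hk.not_isInner (by omega)
  · have := (hφ.isLeaf_iff k).not.mp hk
    exact iff_of_true (MergeTree.isInner_of_not_isLeaf (hφ.1 k) hk) (by omega)

theorem prefix_of_adj (hφ : IsSimplexIso T φ) {v e : Fin (2 * T.innerCount + 1)}
    (hv : v.1 % 2 = 0) (hadj : v.1 + 1 = e.1 ∨ e.1 + 1 = v.1) : φ e <+: φ v := by
  have hvl := (hφ.isLeaf_iff v).mpr hv
  rcases hadj with hadj | hadj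
  · have hlt : v.1 + 1 < 2 * T.innerCount + 1 := hadj ▸ e.2
    rw [show e = ⟨v.1 + 1, hlt⟩ from Fin.ext hadj.symm]
    rcases hφ.covBy v hlt with ⟨-, -, h⟩ | ⟨hi, -, -⟩
    · exact h
    · exact absurd hi hvl.not_isInner
  · have hlt : e.1 + 1 < 2 * T.innerCount + 1 := hadj ▸ v.2
    rw [show v = ⟨e.1 + 1, hlt⟩ from Fin.ext hadj.symm] at hvl ⊢
    rcases hφ.covBy e hlt with ⟨-, hi, -⟩ | ⟨-, -, h⟩
    · exact absurd hi hvl.not_isInner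
    · exact h

end IsSimplexIso

theorem Chir.eq_or_eq_other (x c : Chir) : x = c ∨ x = c.other := by
  cases x <;> cases c <;> simp [Chir.other]

section PathDMF

variable {N : ℕ} {α β : Type*} [LinearOrder α] [LinearOrder β]

/-- A discrete Morse function on the path `Fin N` all of whose simplices are critical:
vertices sit at even positions, and each is strictly below its incident edges. -/
def IsPathDMF (f : Fin N → α) : Prop :=
  Function.Injective f ∧
    ∀ v e : Fin N, v.1 % 2 = 0 → (v.1 + 1 = e.1 ∨ e.1 + 1 = v.1) → f v < f e

def PathShuffleEquiv (f : Fin N → α) (g : Fin N → β) : Prop :=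
  (∀ i j : Fin N, i.1 % 2 = 0 → j.1 % 2 = 0 → (f i ≤ f j ↔ g i ≤ g j)) ∧
    (∀ i j : Fin N, i.1 % 2 = 1 → j.1 % 2 = 1 → (f i ≤ f j ↔ g i ≤ g j))

theorem PathShuffleEquiv.symm {f : Fin N → α} {g : Fin N → β} (h : PathShuffleEquiv f g) :
    PathShuffleEquiv g f :=
  ⟨fun i j hi hj => (h.1 i j hi hj).symm, fun i j hi hj => (h.2 i j hi hj).symm⟩

namespace IsPathDMF

variable {f : Fin N → α} {g : Fin N → β} {a b : ℕ}

theorem odd_of_isMax (hf : IsPathDMF f) (hab : a + 1 < b) (hbN : b ≤ N) {m : Fin N}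
    (ham : a ≤ m.1) (hmb : m.1 < b) (hmax : ∀ i : Fin N, a ≤ i.1 → i.1 < b → f i ≤ f m) :
    m.1 % 2 = 1 := by
  by_contra hm
  replace hm : m.1 % 2 = 0 := by omega
  by_cases hnext : m.1 + 1 < b
  · exact (hmax ⟨m.1 + 1, by omega⟩ (by simp only; omega) hnext).not_gt
      (hf.2 m _ hm (Or.inl rfl))
  · exact (hmax ⟨m.1 - 1, by omega⟩ (by simp only; omega) (by simp only; omega)).not_gt
      (hf.2 m _ hm (Or.inr (by simp only; omega)))

theorem even_of_isMin (hf : IsPathDMF f) (ha : a % 2 = 0) {m : Fin N} (ham : a ≤ m.1)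
    (hmb : m.1 < b) (hmin : ∀ i : Fin N, a ≤ i.1 → i.1 < b → f m ≤ f i) : m.1 % 2 = 0 := by
  by_contra hm
  exact (hmin ⟨m.1 - 1, by omega⟩ (by simp only; omega) (by simp only; omega)).not_gt
    (hf.2 _ m (by simp only; omega) (Or.inl (by simp only; omega)))

theorem eq_of_isMax (hf : IsPathDMF f) (hg : IsPathDMF g) (hfg : PathShuffleEquiv f g)
    (hbN : b ≤ N) {m m' : Fin N} (ham : a ≤ m.1) (hmb : m.1 < b) (ham' : a ≤ m'.1)
    (hmb' : m'.1 < b) (hmax : ∀ i : Fin N, a ≤ i.1 → i.1 < b → f i ≤ f m)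
    (hmax' : ∀ i : Fin N, a ≤ i.1 → i.1 < b → g i ≤ g m') : m = m' := by
  rcases Nat.lt_or_ge (a + 1) b with hab | hab
  · have ho := hf.odd_of_isMax hab hbN ham hmb hmax
    have ho' := hg.odd_of_isMax hab hbN ham' hmb' hmax'
    exact hf.1 (le_antisymm ((hfg.2 m m' ho ho').mpr (hmax' m ham hmb)) (hmax m' ham' hmb'))
  · exact Fin.ext (by omega)

theorem eq_of_isMin (hf : IsPathDMF f) (hg : IsPathDMF g) (hfg : PathShuffleEquiv f g)
    (ha : a % 2 = 0) {m m' : Fin N} (ham : a ≤ m.1) (hmb : m.1 < b) (ham' : a ≤ m'.1)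
    (hmb' : m'.1 < b) (hmin : ∀ i : Fin N, a ≤ i.1 → i.1 < b → f m ≤ f i)
    (hmin' : ∀ i : Fin N, a ≤ i.1 → i.1 < b → g m' ≤ g i) : m = m' :=
  have he := hf.even_of_isMin ha ham hmb hmin
  have he' := hg.even_of_isMin ha ham' hmb' hmin'
  hf.1 (le_antisymm (hmin m' ham' hmb') ((hfg.1 m' m he' he).mpr (hmin' m ham hmb)))

end IsPathDMF

/-- `[lo, hi]` is the connected component containing the edge `e` of the sublevel set
`{i | f i < f e} ∪ {e}`. -/
structure IsSublevelSpan (f : Fin N → α) (e lo hi : Fin N) : Prop where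
  lo_lt : lo.1 < e.1
  lt_hi : e.1 < hi.1
  lt_of_left : ∀ i : Fin N, lo.1 ≤ i.1 → i.1 < e.1 → f i < f e
  lt_of_right : ∀ i : Fin N, e.1 < i.1 → i.1 ≤ hi.1 → f i < f e
  le_of_before : ∀ i : Fin N, i.1 + 1 = lo.1 → f e ≤ f i
  le_of_after : ∀ i : Fin N, hi.1 + 1 = i.1 → f e ≤ f i

namespace IsSublevelSpan

variable {f : Fin N → α} {g : Fin N → β} {e lo hi lo' hi' : Fin N}

theorem lo_even (hf : IsPathDMF f) (h : IsSublevelSpan f e lo hi) : lo.1 % 2 = 0 := by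
  by_contra hlo
  exact ((hf.2 ⟨lo.1 - 1, by omega⟩ lo (by simp only; omega) (Or.inl (by simp only; omega))).trans
    (h.lt_of_left lo le_rfl h.lo_lt)).not_ge (h.le_of_before _ (by simp only; omega))

theorem hi_even (hf : IsPathDMF f) (h : IsSublevelSpan f e lo hi) (hN : hi.1 + 1 < N) :
    hi.1 % 2 = 0 := by
  by_contra hhi
  exact ((hf.2 ⟨hi.1 + 1, hN⟩ hi (by simp only; omega) (Or.inr rfl)).trans
    (h.lt_of_right hi h.lt_hi le_rfl)).not_ge (h.le_of_after _ rfl)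

theorem lo_le (hf : IsPathDMF f) (hfg : PathShuffleEquiv f g) (he : e.1 % 2 = 1)
    (h : IsSublevelSpan f e lo hi) (h' : IsSublevelSpan g e lo' hi') : lo.1 ≤ lo'.1 := by
  by_contra hlt
  have hlo := h.lo_even hf
  have hbefore : f e ≤ f ⟨lo.1 - 1, by omega⟩ := h.le_of_before _ (by simp only; omega)
  exact ((hfg.2 _ _ he (by simp only; omega)).mp hbefore).not_gt
    (h'.lt_of_left _ (by simp only; omega) (by simp only; have := h.lo_lt; omega))

theorem hi_le (hf : IsPathDMF f) (hfg : PathShuffleEquiv f g) (he : e.1 % 2 = 1)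
    (h : IsSublevelSpan f e lo hi) (h' : IsSublevelSpan g e lo' hi') : hi'.1 ≤ hi.1 := by
  by_contra hlt
  have hN : hi.1 + 1 < N := by have := hi'.2; omega
  have hhi := h.hi_even hf hN
  have hafter : f e ≤ f ⟨hi.1 + 1, hN⟩ := h.le_of_after _ rfl
  exact ((hfg.2 _ _ he (by simp only; omega)).mp hafter).not_gt
    (h'.lt_of_right _ (by simp only; have := h.lt_hi; omega) (by simp only; omega))

theorem unique (hf : IsPathDMF f) (hg : IsPathDMF g) (hfg : PathShuffleEquiv f g)
    (he : e.1 % 2 = 1) (h : IsSublevelSpan f e lo hi) (h' : IsSublevelSpan g e lo' hi') :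
    lo = lo' ∧ hi = hi' :=
  ⟨Fin.ext (le_antisymm (h.lo_le hf hfg he h') (h'.lo_le hg hfg.symm he h)),
    Fin.ext (le_antisymm (h'.hi_le hg hfg.symm he h) (h.hi_le hf hfg he h'))⟩

end IsSublevelSpan

end PathDMF

namespace InducedMlPath

variable {N : ℕ} {α β : Type*} [LinearOrder α] [LinearOrder β] {f : Fin N → α} {g : Fin N → β}
  {T₁ T₂ : MergeTree} {ν₁ ν₂ : List Chir → Fin N}

theorem root_eq (hf : IsPathDMF f) (hfg : PathShuffleEquiv f g)
    (h₁ : InducedMlPath f T₁ ν₁) (h₂ : InducedMlPath g T₂ ν₂) : ν₁ [] = ν₂ [] := by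
  by_cases hedge : ∃ i : Fin N, i.1 % 2 = 1
  · obtain ⟨hI₁, hmax₁⟩ := h₁.2.2.1 hedge
    obtain ⟨hI₂, hmax₂⟩ := h₂.2.2.1 hedge
    have ho₁ := (h₁.2.2.2.2 [] hI₁).1
    have ho₂ := (h₂.2.2.2.2 [] hI₂).1
    exact hf.1 (le_antisymm ((hfg.2 _ _ ho₁ ho₂).mpr (hmax₂ _ ho₁)) (hmax₁ _ ho₂))
  · have : N ≤ 1 := by
      by_contra
      exact hedge ⟨⟨1, by omega⟩, rfl⟩
    exact Fin.ext (by have := (ν₁ []).2; have := (ν₂ []).2; omega)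

theorem children_eq (hf : IsPathDMF f) (hg : IsPathDMF g) (hfg : PathShuffleEquiv f g)
    (h₁ : InducedMlPath f T₁ ν₁) (h₂ : InducedMlPath g T₂ ν₂) {w : List Chir}
    (hw₁ : T₁.IsInner w) (hw₂ : T₂.IsInner w) (hν : ν₁ w = ν₂ w) :
    ν₁ (w ++ [chir w]) = ν₂ (w ++ [chir w]) ∧
      ν₁ (w ++ [(chir w).other]) = ν₂ (w ++ [(chir w).other]) := by
  have hsplit₂ := h₂.2.2.2.2 w hw₂
  rw [← hν] at hsplit₂
  obtain ⟨he, lo, hi, hlo, hhi, hA, hB, hC, hD, il, ir, hil₁, hil₂, hir₁, hir₂, hmaxl, hmaxr,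
    ml, mr, hml₁, hml₂, hmr₁, hmr₂, hminl, hminr, hbr⟩ := h₁.2.2.2.2 w hw₁
  obtain ⟨-, lo', hi', hlo', hhi', hA', hB', hC', hD', il', ir', hil₁', hil₂', hir₁', hir₂',
    hmaxl', hmaxr', ml', mr', hml₁', hml₂', hmr₁', hmr₂', hminl', hminr', hbr'⟩ := hsplit₂
  have hspan : IsSublevelSpan f (ν₁ w) lo hi := ⟨hlo, hhi, hA, hB, hC, hD⟩
  obtain ⟨rfl, rfl⟩ := hspan.unique hf hg hfg he ⟨hlo', hhi', hA', hB', hC', hD'⟩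
  have hloE := hspan.lo_even hf
  have hil : il = il' :=
    hf.eq_of_isMax hg hfg (ν₁ w).2.le hil₁ hil₂ hil₁' hil₂' hmaxl hmaxl'
  have hir : ir = ir' :=
    hf.eq_of_isMax hg hfg hi.2 hir₁ (Nat.lt_succ_of_le hir₂) hir₁' (Nat.lt_succ_of_le hir₂')
      (fun i h h' => hmaxr i h (Nat.le_of_lt_succ h'))
      (fun i h h' => hmaxr' i h (Nat.le_of_lt_succ h'))
  have hmlE := hf.even_of_isMin hloE hml₁ hml₂ hminl
  have hmrE := hf.even_of_isMin (b := hi.1 + 1) (by omega) hmr₁ (Nat.lt_succ_of_le hmr₂)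
    (fun i h h' => hminr i h (Nat.le_of_lt_succ h'))
  have hml : ml = ml' := hf.eq_of_isMin hg hfg hloE hml₁ hml₂ hml₁' hml₂' hminl hminl'
  have hmr : mr = mr' :=
    hf.eq_of_isMin hg hfg (by omega) hmr₁ (Nat.lt_succ_of_le hmr₂) hmr₁'
      (Nat.lt_succ_of_le hmr₂') (fun i h h' => hminr i h (Nat.le_of_lt_succ h'))
      (fun i h h' => hminr' i h (Nat.le_of_lt_succ h'))
  subst hil hir hml hmr
  have hminima := hfg.1 ml mr hmlE hmrE
  rcases hbr with ⟨hlt, h, h'⟩ | ⟨hlt, h, h'⟩ <;>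
    rcases hbr' with ⟨hlt', k, k'⟩ | ⟨hlt', k, k'⟩
  · exact ⟨h.trans k.symm, h'.trans k'.symm⟩
  · exact absurd (hminima.mp hlt.le) hlt'.not_ge
  · exact absurd (hminima.mpr hlt'.le) hlt.not_ge
  · exact ⟨h.trans k.symm, h'.trans k'.symm⟩

theorem mem_and_eq (hf : IsPathDMF f) (hg : IsPathDMF g) (hfg : PathShuffleEquiv f g)
    (h₁ : InducedMlPath f T₁ ν₁) (h₂ : InducedMlPath g T₂ ν₂) :
    ∀ n ∈ T₁.nodes, n ∈ T₂.nodes ∧ ν₁ n = ν₂ n := by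
  intro n
  induction n using List.reverseRecOn with
  | nil => exact fun _ => ⟨T₂.root_mem, root_eq hf hfg h₁ h₂⟩
  | append_singleton w x ih =>
    intro hn
    have hw₁ : T₁.IsInner w :=
      ⟨T₁.prefix_closed w x hn, by cases x; exacts [hn, (T₁.full w).mpr hn]⟩
    obtain ⟨hw, hν⟩ := ih hw₁.1
    have hw₂ : T₂.IsInner w := MergeTree.isInner_of_not_isLeaf hw fun hl => by
      have := (h₂.2.1 w hw).mp hl
      have := (h₁.2.2.2.2 w hw₁).1
      rw [hν] at this
      omega
    refine ⟨by cases x; exacts [hw₂.2, (T₂.full w).mp hw₂.2], ?_⟩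
    obtain ⟨hc, hc'⟩ := children_eq hf hg hfg h₁ h₂ hw₁ hw₂ hν
    rcases x.eq_or_eq_other (chir w) with rfl | rfl
    exacts [hc, hc']

theorem nodes_eq (hf : IsPathDMF f) (hg : IsPathDMF g) (hfg : PathShuffleEquiv f g)
    (h₁ : InducedMlPath f T₁ ν₁) (h₂ : InducedMlPath g T₂ ν₂) : T₁.nodes = T₂.nodes :=
  Finset.ext fun n => ⟨fun hn => (mem_and_eq hf hg hfg h₁ h₂ n hn).1,
    fun hn => (mem_and_eq hg hf hfg.symm h₂ h₁ n hn).1⟩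

end InducedMlPath

section MorseLabelings

variable {T : MergeTree} {φ : Fin (2 * T.innerCount + 1) → List Chir}

theorem IsMorseLabeling.isPathDMF_comp {r : List Chir → List Chir → Prop} {lab : List Chir → ℕ}
    (hlab : IsMorseLabeling T r lab) (hφ : IsSimplexIso T φ)
    (hr : ∀ v e : Fin (2 * T.innerCount + 1), v.1 % 2 = 0 → (v.1 + 1 = e.1 ∨ e.1 + 1 = v.1) →
      r (φ v) (φ e)) :
    IsPathDMF fun i => lab (φ i) := by
  have hinj : Function.Injective fun i => lab (φ i) := fun i j h =>
    hφ.injective (hlab.2.2.1 _ (hφ.1 i) _ (hφ.1 j) h)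
  refine ⟨hinj, fun v e hv hadj => lt_of_le_of_ne
    ((hlab.2.2.2 _ (hφ.1 v) _ (hφ.1 e)).mp (hr v e hv hadj)) fun h => ?_⟩
  rw [hinj h] at hadj
  omega

theorem pathShuffleEquiv_io_sc {labio labsc : List Chir → ℕ}
    (hio : IsMorseLabeling T (ioLe T) labio) (hsc : IsMorseLabeling T scLe labsc)
    (hφ : IsSimplexIso T φ) :
    PathShuffleEquiv (fun i => labio (φ i)) (fun i => labsc (φ i)) := by
  refine ⟨fun i j hi hj => ?_, fun i j hi hj => ?_⟩ <;>
    rw [← hio.2.2.2 _ (hφ.1 i) _ (hφ.1 j), ← hsc.2.2.2 _ (hφ.1 i) _ (hφ.1 j)]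
  · exact ioLe_iff_scLe_of_isLeaf ((hφ.isLeaf_iff i).mpr hi) ((hφ.isLeaf_iff j).mpr hj)
  · exact ioLe_iff_scLe_of_isInner ((hφ.isInner_iff i).mpr hi) ((hφ.isInner_iff j).mpr hj)

end MorseLabelings

/-- The induced index-ordered dMf and the induced sublevel-connected dMf on the path
with `i(T)` 1-simplices are shuffle-equivalent (they have the same critical simplices
— all of them — and induce the same orders on 0-simplices and on 1-simplices);
consequently their induced merge trees are isomorphic. -/
theorem stmt17 (T : MergeTree) (labio labsc : List Chir → ℕ)
    (hio : IsMorseLabeling T (ioLe T) labio) (hsc : IsMorseLabeling T scLe labsc)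
    (φ : Fin (2 * T.innerCount + 1) → List Chir) (hφ : IsSimplexIso T φ) :
    (∀ i j : Fin (2 * T.innerCount + 1), i.1 % 2 = 0 → j.1 % 2 = 0 →
        (labio (φ i) ≤ labio (φ j) ↔ labsc (φ i) ≤ labsc (φ j))) ∧
    (∀ i j : Fin (2 * T.innerCount + 1), i.1 % 2 = 1 → j.1 % 2 = 1 →
        (labio (φ i) ≤ labio (φ j) ↔ labsc (φ i) ≤ labsc (φ j))) ∧
    (∀ (T₁ T₂ : MergeTree) (ν₁ ν₂ : List Chir → Fin (2 * T.innerCount + 1)),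
        InducedMlPath (fun i => labio (φ i)) T₁ ν₁ →
        InducedMlPath (fun i => labsc (φ i)) T₂ ν₂ → T₁.nodes = T₂.nodes) := by
  have hshuffle := pathShuffleEquiv_io_sc hio hsc hφ
  -- leaves precede inner nodes in the index order
  have hdmf_io : IsPathDMF fun i => labio (φ i) :=
    hio.isPathDMF_comp hφ fun v e hv hadj =>
      Or.inl ⟨(hφ.isLeaf_iff v).mpr hv, (hφ.isInner_iff e).mpr (by omega)⟩
  have hdmf_sc : IsPathDMF fun i => labsc (φ i) :=
    hsc.isPathDMF_comp hφ fun v e hv hadj => scLe_of_prefix (hφ.prefix_of_adj hv hadj)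
  exact ⟨hshuffle.1, hshuffle.2, fun _ _ _ _ h₁ h₂ => h₁.nodes_eq hdmf_io hdmf_sc hshuffle h₂⟩
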